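/- arXiv:2211.03467 — 4 statements merged into one kernel-verified Lean document; each statement's English description precedes it below -/
import Mathlib

section
/- Let E be a real vector space, n a natural number, and for each 0 ≤ k ≤ n let J_k : E → ℝ be linear functionals. Let D : E → E be linear, and assume the family of operators ∇^r on E satisfies: J_k(∇^r φ) = (k!/(k−r)!) J_k(φ) for r ≤ k and J_k(∇^r φ) = 0 for r > k. Define J = ∑_{k=0}^{n} J_k. Then for every 0 ≤ r ≤ n and every φ ∈ E, J_r(φ) = ∑_{k=r}^{n} ((−1)^{k−r} / ((k−r)!·r!)) · J(∇^k φ). -/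
lemma alt_sum_real (m : ℕ) :
    ∑ j ∈ Finset.range (m + 1), (-1 : ℝ) ^ j * ((m.choose j : ℕ) : ℝ)
      = if m = 0 then 1 else 0 := by
  have := Int.alternating_sum_range_choose (n := m)
  have h := congrArg (fun z : ℤ => (z : ℝ)) this
  push_cast at h
  split <;> simp_all

lemma dixon_key (r l : ℕ) :
    ∑ k ∈ Finset.Icc r l, ((-1 : ℝ) ^ (k - r) / ((k - r).factorial * r.factorial)) *
      ((l.factorial / (l - k).factorial : ℕ) : ℝ) = if r = l then 1 else 0 := by
  rcases le_or_gt r l with hrl | hrl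
  · rw [← Finset.Ico_add_one_right_eq_Icc, Finset.sum_Ico_eq_sum_range]
    have hrange : l + 1 - r = (l - r) + 1 := by omega
    rw [hrange]
    have hterm : ∀ j ∈ Finset.range ((l - r) + 1),
        ((-1 : ℝ) ^ (r + j - r) / ((r + j - r).factorial * r.factorial)) *
          ((l.factorial / (l - (r + j)).factorial : ℕ) : ℝ)
        = (l.choose r : ℝ) * ((-1 : ℝ) ^ j * (((l - r).choose j : ℕ) : ℝ)) := by
      intro j hj
      have hj' : j ≤ l - r := by simpa [Nat.lt_succ_iff] using hj
      have hrj : r + j ≤ l := by omega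
      rw [Nat.add_sub_cancel_left]
      have hcast : ((l.factorial / (l - (r + j)).factorial : ℕ) : ℝ)
          = (l.factorial : ℝ) / ((l - (r + j)).factorial : ℝ) :=
        Nat.cast_div (Nat.factorial_dvd_factorial (by omega))
          (by exact_mod_cast (l - (r + j)).factorial_ne_zero)
      rw [hcast, Nat.cast_choose ℝ hrl, Nat.cast_choose ℝ hj']
      have h1 : (l - r) - j = l - (r + j) := by omega
      rw [h1]
      have f1 : ((r.factorial : ℝ)) ≠ 0 := by exact_mod_cast r.factorial_ne_zero
      have f2 : ((j.factorial : ℝ)) ≠ 0 := by exact_mod_cast j.factorial_ne_zero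
      have f3 : (((l - r).factorial : ℝ)) ≠ 0 := by exact_mod_cast (l - r).factorial_ne_zero
      have f4 : (((l - (r + j)).factorial : ℝ)) ≠ 0 := by
        exact_mod_cast (l - (r + j)).factorial_ne_zero
      field_simp
    rw [Finset.sum_congr rfl hterm, ← Finset.mul_sum, alt_sum_real]
    rcases eq_or_ne r l with h | h
    · subst h; simp
    · have : l - r ≠ 0 := by omega
      simp [this, h]
  · rw [Finset.Icc_eq_empty (by omega)]
    have : r ≠ l := by omega
    simp [this]

/-- Abstract form of the Dixon split inversion (thm_Split_Jr):
`J_r φ = ∑_{k=r}^n ((-1)^{k-r}/((k-r)! r!)) J(∇^k φ)` where `J = ∑_{k=0}^n J_k`. -/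
theorem dixon_split_inversion {E : Type*} [AddCommGroup E] [Module ℝ E] (n : ℕ)
    (J : ℕ → E →ₗ[ℝ] ℝ) (D : E →ₗ[ℝ] E) (Nab : ℕ → E → E)
    (hJk : ∀ k ≤ n, ∀ (r : ℕ) (φ : E),
      (r ≤ k → J k (Nab r φ) = ((k.factorial / (k - r).factorial : ℕ) : ℝ) * J k φ) ∧
      (k < r → J k (Nab r φ) = 0)) :
    ∀ r ≤ n, ∀ φ : E,
      J r φ = ∑ k ∈ Finset.Icc r n,
        ((-1 : ℝ) ^ (k - r) / ((k - r).factorial * r.factorial)) *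
          (∑ l ∈ Finset.range (n + 1), J l (Nab k φ)) := by
  intro r hr φ
  have hmain : ∀ l ∈ Finset.range (n + 1), ∀ k, J l (Nab k φ) =
      if k ≤ l then ((l.factorial / (l - k).factorial : ℕ) : ℝ) * J l φ else 0 := by
    intro l hl k
    have hl' : l ≤ n := Nat.lt_succ_iff.mp (Finset.mem_range.mp hl)
    split
    · exact (hJk l hl' k φ).1 ‹_›
    · exact (hJk l hl' k φ).2 (by omega)
  calc J r φ
      = ∑ l ∈ Finset.range (n + 1), (if r = l then 1 else 0) * J l φ := by
        simp only [ite_mul, one_mul, zero_mul, Finset.sum_ite_eq, Finset.mem_range]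
        rw [if_pos (Nat.lt_succ_iff.mpr hr)]
    _ = ∑ l ∈ Finset.range (n + 1), ∑ k ∈ Finset.Icc r n,
          ((-1 : ℝ) ^ (k - r) / ((k - r).factorial * r.factorial)) * J l (Nab k φ) := by
        refine Finset.sum_congr rfl fun l hl => ?_
        have hl' : l ≤ n := Nat.lt_succ_iff.mp (Finset.mem_range.mp hl)
        have h1 : ∑ k ∈ Finset.Icc r n,
            ((-1 : ℝ) ^ (k - r) / ((k - r).factorial * r.factorial)) * J l (Nab k φ)
            = ∑ k ∈ Finset.Icc r n, (if k ≤ l then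
              ((-1 : ℝ) ^ (k - r) / ((k - r).factorial * r.factorial)) *
                (((l.factorial / (l - k).factorial : ℕ) : ℝ) * J l φ) else 0) := by
          refine Finset.sum_congr rfl fun k _ => ?_
          rw [hmain l hl k]
          split <;> simp
        rw [h1, Finset.sum_ite, Finset.sum_const_zero, add_zero]
        have hfil : (Finset.Icc r n).filter (· ≤ l) = Finset.Icc r l := by
          ext x; simp; omega
        rw [hfil]
        have h2 : ∑ k ∈ Finset.Icc r l,
            ((-1 : ℝ) ^ (k - r) / ((k - r).factorial * r.factorial)) *
              (((l.factorial / (l - k).factorial : ℕ) : ℝ) * J l φ)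
            = (∑ k ∈ Finset.Icc r l, ((-1 : ℝ) ^ (k - r) / ((k - r).factorial * r.factorial)) *
              ((l.factorial / (l - k).factorial : ℕ) : ℝ)) * J l φ := by
          rw [Finset.sum_mul]
          exact Finset.sum_congr rfl fun k _ => by ring
        rw [h2, dixon_key]
    _ = ∑ k ∈ Finset.Icc r n,
        ((-1 : ℝ) ^ (k - r) / ((k - r).factorial * r.factorial)) *
          (∑ l ∈ Finset.range (n + 1), J l (Nab k φ)) := by
        rw [Finset.sum_comm]
        exact Finset.sum_congr rfl fun k _ => by rw [Finset.mul_sum]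
end

section
/- With the hypotheses of the previous abstraction (J = ∑_{k=0}^n J_k, each J_k satisfying J_k(∇^r φ) = k!/(k−r)! J_k(φ) for r ≤ k and 0 for r > k): if J(∇^r φ) = 0 for all φ and all 0 ≤ r ≤ n, then J_k = 0 for every k; conversely if J = 0 as a functional then J(∇^r φ) = 0 for all r and φ. -/
/-- Abstract form of Corollary lm_J_0 and uniqueness of the Dixon split:
if `J(∇^r φ) = 0` for all `r ≤ n` and all `φ`, then each homogeneous piece
`J_k` vanishes; conversely if `J = 0` then `J(∇^r φ) = 0` for all `r, φ`. -/
theorem dixon_split_vanishing {E : Type*} [AddCommGroup E] [Module ℝ E] (n : ℕ)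
    (J : ℕ → E →ₗ[ℝ] ℝ) (Nab : ℕ → E → E)
    (hJk : ∀ k ≤ n, ∀ (r : ℕ) (φ : E),
      (r ≤ k → J k (Nab r φ) = ((k.factorial / (k - r).factorial : ℕ) : ℝ) * J k φ) ∧
      (k < r → J k (Nab r φ) = 0)) :
    ((∀ r ≤ n, ∀ φ : E, ∑ l ∈ Finset.range (n + 1), J l (Nab r φ) = 0) →
        ∀ k ≤ n, J k = 0) ∧
    ((∀ φ : E, ∑ l ∈ Finset.range (n + 1), J l φ = 0) →
        ∀ (r : ℕ) (φ : E), ∑ l ∈ Finset.range (n + 1), J l (Nab r φ) = 0) := by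
  constructor
  · intro h
    have step : ∀ k, k ≤ n → (∀ j, k < j → j ≤ n → J j = 0) → J k = 0 := by
      intro k hk ih
      ext φ
      have h0 := h k hk φ
      rw [Finset.sum_eq_single_of_mem k (Finset.mem_range.2 (by omega))] at h0
      · rw [(hJk k hk k φ).1 le_rfl] at h0
        have hfac : ((k.factorial : ℝ)) ≠ 0 := by
          exact_mod_cast k.factorial_ne_zero
        simp only [Nat.sub_self, Nat.factorial_zero, Nat.div_one] at h0
        rcases mul_eq_zero.1 h0 with h1 | h1
        · exact absurd h1 hfac
        · simpa using h1
      · intro l hl hne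
        have hln : l ≤ n := Nat.lt_succ_iff.1 (Finset.mem_range.1 hl)
        rcases lt_or_gt_of_ne hne with hlt | hgt
        · exact (hJk l hln k φ).2 hlt
        · rw [(hJk l hln k φ).1 (le_of_lt hgt), ih l hgt hln]
          simp
    have key : ∀ d k, k ≤ n → n ≤ k + d → J k = 0 := by
      intro d
      induction d with
      | zero =>
        intro k hk hd
        exact step k hk (fun j hj hj' => by omega)
      | succ d ihd =>
        intro k hk hd
        exact step k hk (fun j hj hj' => ihd j hj' (by omega))
    intro k hk
    exact key n k hk (by omega)
  · intro h r φ
    exact h (Nab r φ)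
end

section
/- Consider the Mathisson–Papapetrou reduction: let C be a geodesic (∇_Ċ Ċ = 0) in a Lorentzian 4-manifold, N_μ = −Ċ_μ with Ċ normalized so N_μ Ċ^μ = 1, and define ξ^{μνλ} = X^λ Ċ^μ Ċ^ν + S^{λ(μ} Ċ^{ν)} where X^μ, S^{μν} are fields along C with X_μ Ċ^μ = 0, Ċ_μ S^{μν} = 0, S^{μν} = −S^{νμ}. Then the quantity N_ν ξ^{μνρ} equals X^ρ Ċ^μ + ½ S^{ρμ}, and the equation ∇_Ċ(N_ν ξ^{μνρ}) = −π^ρ_α ξ^{μα}, with ξ^{μν} = 2 P^{(μ}Ċ^{ν)} − 2m Ċ^μ Ċ^ν and P_μ Ċ^μ = 0, is equivalent to the pair of equations ∇_Ċ X^μ = −P^μ and ∇_Ċ S^{μν} = 0. -/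
/-- Covariant derivative along the worldline (parameter `s`) of a (1,0) tensor
field along the worldline; `A^μ_ν = Γ^μ_{ρν} Ċ^ρ` is the connection contracted
with the tangent. -/
noncomputable def D1 (A : ℝ → Fin 4 → Fin 4 → ℝ) (T : ℝ → Fin 4 → ℝ) :
    ℝ → Fin 4 → ℝ :=
  fun s μ => deriv (fun t => T t μ) s + ∑ ν, A s μ ν * T s ν

/-- Covariant derivative along the worldline of a (2,0) tensor field. -/
noncomputable def D2 (A : ℝ → Fin 4 → Fin 4 → ℝ) (T : ℝ → Fin 4 → Fin 4 → ℝ) :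
    ℝ → Fin 4 → Fin 4 → ℝ :=
  fun s μ ρ => deriv (fun t => T t μ ρ) s +
    ∑ ν, A s μ ν * T s ν ρ + ∑ ν, A s ρ ν * T s μ ν

/-!
Contracting the dipole ansatz with `N` leaves `N_ν Ċ^ν = 1` and kills `N_ν S^{ρν}`, so
`N_ν ξ^{μνρ} = X^ρ Ċ^μ + ½ S^{ρμ}`. Along a geodesic of a metric connection the covector `N` is
parallel, hence `∇_Ċ` of this tensor is `Ċ^μ ∇_Ċ X^ρ + ½ ∇_Ċ S^{ρμ}`, while the projected source
is `-P^ρ Ċ^μ`. Contracting the resulting equation with `N_μ` annihilates `∇_Ċ S` (as `N` is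
parallel and `N_μ S^{ρμ} = 0`) and gives `∇_Ċ X = -P`; what is left is `∇_Ċ S = 0`.
-/

open Finset

section Contraction

variable {ι : Type*} [Fintype ι]

theorem sum_lower_mul (g : ι → ι → ℝ) (u v : ι → ℝ) :
    ∑ ν, (∑ μ, g μ ν * u μ) * v ν = ∑ μ, ∑ ν, g μ ν * u μ * v ν := by
  simp only [sum_mul]
  exact sum_comm

theorem sum_sum_mul_comm {g : ι → ι → ℝ} (hg : ∀ μ ν, g μ ν = g ν μ) (u v : ι → ℝ) :
    ∑ μ, ∑ ν, g μ ν * u μ * v ν = ∑ μ, ∑ ν, g μ ν * v μ * u ν := by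
  rw [sum_comm]
  simp only [hg, mul_right_comm]

theorem sum_mul_dipole {n c X : ι → ℝ} {S : ι → ι → ℝ} (μ ρ : ι) (hnc : ∑ ν, n ν * c ν = 1)
    (hnS : ∑ ν, n ν * S ρ ν = 0) :
    ∑ ν, n ν * (X ρ * c μ * c ν + (S ρ μ * c ν + S ρ ν * c μ) / 2) =
      X ρ * c μ + S ρ μ / 2 := by
  calc ∑ ν, n ν * (X ρ * c μ * c ν + (S ρ μ * c ν + S ρ ν * c μ) / 2)
      = (X ρ * c μ + S ρ μ / 2) * ∑ ν, n ν * c ν + c μ / 2 * ∑ ν, n ν * S ρ ν := by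
        simp only [mul_sum, ← sum_add_distrib]
        exact sum_congr rfl fun ν _ => by ring
    _ = X ρ * c μ + S ρ μ / 2 := by rw [hnc, hnS]; ring

theorem sum_projector_mul_quadrupole [DecidableEq ι] {n c P : ι → ℝ} (hnc : ∑ α, n α * c α = 1)
    (hnP : ∑ α, n α * P α = 0) (m : ℝ) (μ ρ : ι) :
    ∑ α, ((if ρ = α then (1:ℝ) else 0) - c ρ * n α) *
      (P μ * c α + P α * c μ - 2 * m * c μ * c α) = P ρ * c μ := by
  have hnξ : ∑ α, n α * (P μ * c α + P α * c μ - 2 * m * c μ * c α) = P μ - 2 * m * c μ := by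
    calc ∑ α, n α * (P μ * c α + P α * c μ - 2 * m * c μ * c α)
        = P μ * ∑ α, n α * c α + c μ * ∑ α, n α * P α - 2 * m * c μ * ∑ α, n α * c α := by
          simp only [mul_sum, ← sum_add_distrib, ← sum_sub_distrib]
          exact sum_congr rfl fun α _ => by ring
      _ = P μ - 2 * m * c μ := by rw [hnc, hnP]; ring
  calc ∑ α, ((if ρ = α then (1:ℝ) else 0) - c ρ * n α) *
        (P μ * c α + P α * c μ - 2 * m * c μ * c α)
      = (P μ * c ρ + P ρ * c μ - 2 * m * c μ * c ρ) -
          c ρ * ∑ α, n α * (P μ * c α + P α * c μ - 2 * m * c μ * c α) := by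
        simp only [sub_mul, sum_sub_distrib, ite_mul, one_mul, zero_mul, sum_ite_eq, mem_univ,
          if_true, mul_sum, mul_assoc]
    _ = P ρ * c μ := by rw [hnξ]; ring

theorem outer_add_eq_outer_iff {n c x y : ι → ℝ} {T : ι → ι → ℝ} (hnc : ∑ μ, n μ * c μ = 1)
    (hnT : ∀ ρ, ∑ μ, n μ * T ρ μ = 0) :
    (∀ μ ρ, c μ * x ρ + T ρ μ = c μ * y ρ) ↔ (∀ ρ, x ρ = y ρ) ∧ ∀ ρ μ, T ρ μ = 0 := by
  refine ⟨fun h => ?_, fun ⟨hxy, hT⟩ μ ρ => by rw [hxy, hT, add_zero]⟩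
  have hxy : ∀ ρ, x ρ = y ρ := fun ρ => by
    have := congrArg (fun f : ι → ℝ => ∑ μ, n μ * f μ) (funext fun μ => h μ ρ)
    simpa only [mul_add, sum_add_distrib, hnT, ← mul_assoc, ← sum_mul, hnc, one_mul,
      add_zero] using this
  exact ⟨hxy, fun ρ μ => by simpa [hxy] using h μ ρ⟩

end Contraction

def IsParallelCovector (A : ℝ → Fin 4 → Fin 4 → ℝ) (n : ℝ → Fin 4 → ℝ) : Prop :=
  ∀ s μ, HasDerivAt (fun t => n t μ) (∑ ρ, A s ρ μ * n s ρ) s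

theorem IsParallelCovector.neg {A : ℝ → Fin 4 → Fin 4 → ℝ} {n : ℝ → Fin 4 → ℝ}
    (hn : IsParallelCovector A n) : IsParallelCovector A fun s μ => -n s μ := fun s μ =>
  (hn s μ).neg.congr_deriv (by simp only [mul_neg, sum_neg_distrib])

theorem hasDerivAt_of_D1_eq_zero {A : ℝ → Fin 4 → Fin 4 → ℝ} {V : ℝ → Fin 4 → ℝ} {s : ℝ}
    {μ : Fin 4} (hV : DifferentiableAt ℝ (fun t => V t μ) s) (h : D1 A V s μ = 0) :
    HasDerivAt (fun t => V t μ) (-∑ ν, A s μ ν * V s ν) s := by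
  rw [D1, add_eq_zero_iff_eq_neg] at h
  exact h ▸ hV.hasDerivAt

theorem isParallelCovector_lower {A g : ℝ → Fin 4 → Fin 4 → ℝ} {V : ℝ → Fin 4 → ℝ}
    (hgdiff : ∀ μ ν, Differentiable ℝ fun t => g t μ ν)
    (hmetric : ∀ s μ ν, deriv (fun t => g t μ ν) s =
      ∑ ρ, A s ρ μ * g s ρ ν + ∑ ρ, A s ρ ν * g s μ ρ)
    (hVdiff : ∀ μ, Differentiable ℝ fun t => V t μ) (hV : ∀ s μ, D1 A V s μ = 0) :
    IsParallelCovector A fun s ν => ∑ μ, g s μ ν * V s μ := by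
  intro s ν
  have hg : ∀ μ, HasDerivAt (fun t => g t μ ν)
      (∑ ρ, A s ρ μ * g s ρ ν + ∑ ρ, A s ρ ν * g s μ ρ) s :=
    fun μ => hmetric s μ ν ▸ (hgdiff μ ν s).hasDerivAt
  refine (HasDerivAt.fun_sum fun μ _ =>
    (hg μ).fun_mul (hasDerivAt_of_D1_eq_zero (hVdiff μ s) (hV s μ))).congr_deriv ?_
  simp only [add_mul, mul_neg, sum_add_distrib, sum_neg_distrib, sum_mul, mul_sum]
  rw [sum_comm (f := fun μ ρ => A s ρ μ * g s ρ ν * V s μ),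
    sum_comm (f := fun μ ρ => A s ρ ν * g s μ ρ * V s μ)]
  simp only [mul_comm, mul_left_comm]
  ring

theorem sum_mul_D2 {A : ℝ → Fin 4 → Fin 4 → ℝ} {n : ℝ → Fin 4 → ℝ} (hn : IsParallelCovector A n)
    {T : ℝ → Fin 4 → Fin 4 → ℝ} {s : ℝ} (hT : ∀ ρ μ, DifferentiableAt ℝ (fun t => T t ρ μ) s)
    (ρ : Fin 4) :
    ∑ μ, n s μ * D2 A T s ρ μ = deriv (fun t => ∑ μ, n t μ * T t ρ μ) s +
      ∑ ν, A s ρ ν * ∑ μ, n s μ * T s ν μ := by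
  rw [(HasDerivAt.fun_sum fun μ _ => (hn s μ).fun_mul (hT ρ μ).hasDerivAt).deriv]
  simp only [D2, mul_add, sum_add_distrib, sum_mul, mul_sum]
  rw [sum_comm (f := fun μ ν => n s μ * (A s ρ ν * T s ν μ)),
    sum_comm (f := fun μ ν => n s μ * (A s μ ν * T s ρ ν))]
  simp only [mul_comm, mul_left_comm]
  ring

theorem D2_dipole {A : ℝ → Fin 4 → Fin 4 → ℝ} {C X : ℝ → Fin 4 → ℝ} {S : ℝ → Fin 4 → Fin 4 → ℝ}
    {s : ℝ} (hC : ∀ μ, DifferentiableAt ℝ (fun t => C t μ) s)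
    (hX : ∀ μ, DifferentiableAt ℝ (fun t => X t μ) s)
    (hS : ∀ μ ν, DifferentiableAt ℝ (fun t => S t μ ν) s) (μ ρ : Fin 4) :
    D2 A (fun t μ ρ => X t ρ * C t μ + S t ρ μ / 2) s μ ρ =
      D1 A C s μ * X s ρ + C s μ * D1 A X s ρ + D2 A S s ρ μ / 2 := by
  simp only [D1, D2]
  rw [deriv_fun_add ((hX ρ).fun_mul (hC μ)) ((hS ρ μ).div_const 2),
    deriv_fun_mul (hX ρ) (hC μ), deriv_div_const]
  simp only [mul_add, add_mul, add_div, sum_add_distrib, mul_sum, sum_mul, sum_div]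
  ring_nf

theorem mathisson_papapetrou_reduction_general
    (A g : ℝ → Fin 4 → Fin 4 → ℝ)
    (Cdot X P : ℝ → Fin 4 → ℝ) (S : ℝ → Fin 4 → Fin 4 → ℝ) (m : ℝ → ℝ)
    (hgsym : ∀ s μ ν, g s μ ν = g s ν μ)
    (hgdiff : ∀ μ ν, Differentiable ℝ fun t => g t μ ν)
    (hXdiff : ∀ μ, Differentiable ℝ fun t => X t μ)
    (hSdiff : ∀ μ ν, Differentiable ℝ fun t => S t μ ν)
    (hCdiff : ∀ μ, Differentiable ℝ fun t => Cdot t μ)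
    (hgeo : ∀ s μ, D1 A Cdot s μ = 0)
    (hmetric : ∀ s μ ν, deriv (fun t => g t μ ν) s =
      ∑ ρ, A s ρ μ * g s ρ ν + ∑ ρ, A s ρ ν * g s μ ρ)
    (hnorm : ∀ s, ∑ μ, ∑ ν, g s μ ν * Cdot s μ * Cdot s ν = -1)
    (hP : ∀ s, ∑ μ, ∑ ν, g s μ ν * P s μ * Cdot s ν = 0)
    (hCS : ∀ s ν, ∑ μ, ∑ ρ, g s ρ μ * Cdot s ρ * S s μ ν = 0)
    (hSanti : ∀ s μ ν, S s μ ν = -(S s ν μ)) :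
    let N : ℝ → Fin 4 → ℝ := fun s ν => -∑ μ, g s μ ν * Cdot s μ
    let ξ3 : ℝ → Fin 4 → Fin 4 → Fin 4 → ℝ := fun s μ ν ρ =>
      X s ρ * Cdot s μ * Cdot s ν +
        (S s ρ μ * Cdot s ν + S s ρ ν * Cdot s μ) / 2
    let ξ2 : ℝ → Fin 4 → Fin 4 → ℝ := fun s μ ν =>
      P s μ * Cdot s ν + P s ν * Cdot s μ - 2 * m s * Cdot s μ * Cdot s ν
    let pr : ℝ → Fin 4 → Fin 4 → ℝ := fun s ρ α =>
      (if ρ = α then (1:ℝ) else 0) - Cdot s ρ * N s α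
    (∀ s μ ρ, ∑ ν, N s ν * ξ3 s μ ν ρ = X s ρ * Cdot s μ + S s ρ μ / 2) ∧
    ((∀ s μ ρ, D2 A (fun t μ' ρ' => ∑ ν, N t ν * ξ3 t μ' ν ρ') s μ ρ =
        -∑ α, pr s ρ α * ξ2 s μ α) ↔
      ((∀ s μ, D1 A X s μ = -(P s μ)) ∧ (∀ s μ ν, D2 A S s μ ν = 0))) := by
  intro N ξ3 ξ2 pr
  have hNC : ∀ s, ∑ μ, N s μ * Cdot s μ = 1 := fun s => by
    simp only [N, neg_mul, sum_neg_distrib, sum_lower_mul, hnorm, neg_neg]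
  have hNP : ∀ s, ∑ μ, N s μ * P s μ = 0 := fun s => by
    simp only [N, neg_mul, sum_neg_distrib, sum_lower_mul]
    rw [sum_sum_mul_comm (hgsym s), hP, neg_zero]
  have hNS : ∀ s ρ, ∑ μ, N s μ * S s ρ μ = 0 := fun s ρ => by
    simp only [N, hSanti s ρ, mul_neg, neg_mul, neg_neg, sum_mul, hCS]
  have hN : IsParallelCovector A N := (isParallelCovector_lower hgdiff hmetric hCdiff hgeo).neg
  have hNDS : ∀ s ρ, ∑ μ, N s μ * (D2 A S s ρ μ / 2) = 0 := fun s ρ => by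
    simp only [mul_div_assoc', ← sum_div,
      sum_mul_D2 hN (fun ρ μ => (hSdiff ρ μ).differentiableAt), hNS, deriv_const', mul_zero,
      sum_const_zero, add_zero, zero_div]
  have hdipole : ∀ s μ ρ, ∑ ν, N s ν * ξ3 s μ ν ρ = X s ρ * Cdot s μ + S s ρ μ / 2 :=
    fun s μ ρ => sum_mul_dipole μ ρ (hNC s) (hNS s ρ)
  have hLHS : ∀ s μ ρ, D2 A (fun t μ' ρ' => ∑ ν, N t ν * ξ3 t μ' ν ρ') s μ ρ =
      Cdot s μ * D1 A X s ρ + D2 A S s ρ μ / 2 := fun s μ ρ => by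
    simp only [hdipole]
    rw [D2_dipole (fun μ => (hCdiff μ).differentiableAt) (fun μ => (hXdiff μ).differentiableAt)
      (fun μ ν => (hSdiff μ ν).differentiableAt), hgeo, zero_mul, zero_add]
  have hRHS : ∀ s μ ρ, -∑ α, pr s ρ α * ξ2 s μ α = Cdot s μ * -P s ρ := fun s μ ρ => by
    rw [sum_projector_mul_quadrupole (hNC s) (hNP s)]
    ring
  refine ⟨hdipole, ?_⟩
  simp only [hLHS, hRHS]
  rw [← forall_and]
  refine forall_congr' fun s => ?_
  rw [outer_add_eq_outer_iff (hNC s) (hNDS s)]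
  simp only [div_eq_zero_iff, two_ne_zero, or_false]

/-- Mathisson–Papapetrou reduction (Corollary to Theorem 4.2, algebraic part):
along a geodesic with `N = -Ċ_♭`, `N(Ċ) = 1`, the dipole ansatz
`ξ^{μνλ} = X^λ Ċ^μ Ċ^ν + S^{λ(μ} Ċ^{ν)}` gives
`N_ν ξ^{μνρ} = X^ρ Ċ^μ + ½ S^{ρμ}`, and the dynamical equation
`∇_Ċ(N_ν ξ^{μνρ}) = -π^ρ_α ξ^{μα}` (with `ξ^{μν} = 2P^{(μ}Ċ^{ν)} - 2m Ċ^μ Ċ^ν`)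
is equivalent to `∇_Ċ X = -P` and `∇_Ċ S = 0`. -/
theorem mathisson_papapetrou_reduction
    (A g : ℝ → Fin 4 → Fin 4 → ℝ)
    (Cdot X P : ℝ → Fin 4 → ℝ) (S : ℝ → Fin 4 → Fin 4 → ℝ) (m : ℝ → ℝ)
    (hgsym : ∀ s μ ν, g s μ ν = g s ν μ)
    (hgdiff : ∀ μ ν, Differentiable ℝ fun t => g t μ ν)
    (hXdiff : ∀ μ, Differentiable ℝ fun t => X t μ)
    (hPdiff : ∀ μ, Differentiable ℝ fun t => P t μ)
    (hSdiff : ∀ μ ν, Differentiable ℝ fun t => S t μ ν)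
    (hCdiff : ∀ μ, Differentiable ℝ fun t => Cdot t μ)
    (hgeo : ∀ s μ, D1 A Cdot s μ = 0)
    (hmetric : ∀ s μ ν, deriv (fun t => g t μ ν) s =
      ∑ ρ, A s ρ μ * g s ρ ν + ∑ ρ, A s ρ ν * g s μ ρ)
    (hnorm : ∀ s, ∑ μ, ∑ ν, g s μ ν * Cdot s μ * Cdot s ν = -1)
    (hX : ∀ s, ∑ μ, ∑ ν, g s μ ν * X s μ * Cdot s ν = 0)
    (hP : ∀ s, ∑ μ, ∑ ν, g s μ ν * P s μ * Cdot s ν = 0)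
    (hCS : ∀ s ν, ∑ μ, ∑ ρ, g s ρ μ * Cdot s ρ * S s μ ν = 0)
    (hSanti : ∀ s μ ν, S s μ ν = -(S s ν μ)) :
    let N : ℝ → Fin 4 → ℝ := fun s ν => -∑ μ, g s μ ν * Cdot s μ
    let ξ3 : ℝ → Fin 4 → Fin 4 → Fin 4 → ℝ := fun s μ ν ρ =>
      X s ρ * Cdot s μ * Cdot s ν +
        (S s ρ μ * Cdot s ν + S s ρ ν * Cdot s μ) / 2
    let ξ2 : ℝ → Fin 4 → Fin 4 → ℝ := fun s μ ν =>
      P s μ * Cdot s ν + P s ν * Cdot s μ - 2 * m s * Cdot s μ * Cdot s ν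
    let pr : ℝ → Fin 4 → Fin 4 → ℝ := fun s ρ α =>
      (if ρ = α then (1:ℝ) else 0) - Cdot s ρ * N s α
    (∀ s μ ρ, ∑ ν, N s ν * ξ3 s μ ν ρ = X s ρ * Cdot s μ + S s ρ μ / 2) ∧
    ((∀ s μ ρ, D2 A (fun t μ' ρ' => ∑ ν, N t ν * ξ3 t μ' ν ρ') s μ ρ =
        -∑ α, pr s ρ α * ξ2 s μ α) ↔
      ((∀ s μ, D1 A X s μ = -(P s μ)) ∧ (∀ s μ ν, D2 A S s μ ν = 0))) :=
  mathisson_papapetrou_reduction_general A g Cdot X P S m hgsym hgdiff hXdiff hSdiff hCdiff hgeo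
    hmetric hnorm hP hCS hSanti
end

section
/- Let V be a vector space with a metric g of Lorentzian signature, C a geodesic, and suppose the dipole stress-energy components satisfy ∇_Ċ(N_ν ξ^{μν}) = X^λ Ċ^β Ċ^ρ R^μ_{ρβλ} + ½ Ċ^ρ S^{λβ} R^μ_{ρβλ}, where ξ^{μν} = 2P^{(μ}Ċ^{ν)} − 2m Ċ^μ Ċ^ν, N = −Ċ_♭, N(Ċ) = 1, P_μ Ċ^μ = 0. Then projecting with Ċ_μ and with π^α_μ yields: ṁ = 0 (the mass is constant) and ∇_Ċ P^μ = ½ R^μ_{νρκ} Ċ^ν S^{κρ} + R^μ_{νρκ} Ċ^ν Ċ^ρ X^κ (the momentum equation). -/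
/-- The Dixon covector `N = -Ċ_♭`. -/
noncomputable def Ncov (g : ℝ → Fin 4 → Fin 4 → ℝ) (Cdot : ℝ → Fin 4 → ℝ) :
    ℝ → Fin 4 → ℝ :=
  fun s ν => -∑ μ, g s μ ν * Cdot s μ

/-- The monopole/dipole stress-energy components
`ξ^{μν} = 2P^{(μ}Ċ^{ν)} - 2m Ċ^μ Ċ^ν`. -/
noncomputable def xi2 (P Cdot : ℝ → Fin 4 → ℝ) (m : ℝ → ℝ) :
    ℝ → Fin 4 → Fin 4 → ℝ :=
  fun s μ ν => P s μ * Cdot s ν + P s ν * Cdot s μ - 2 * m s * Cdot s μ * Cdot s ν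

/-!
Contracting with `N` turns `N_ν ξ^{μν}` into `P^μ - 2m Ċ^μ`, because `N(Ċ) = 1` and `N(P) = 0`;
along the geodesic the Leibniz rule then gives `∇_Ċ(P - 2mĊ) = ∇_Ċ P - 2ṁ Ċ`.
Contracting the resulting equation once more with `N`, the curvature terms drop out since
`R_{μνρκ}` is antisymmetric in `μν`, and `N(∇_Ċ P) = 0` because differentiating `g(Ċ, P) = 0`
with a metric connection leaves only `g(Ċ, ∇_Ċ P)`. Hence `ṁ = 0`, and what remains is the
momentum equation.
-/

open Finset

theorem sum_sum_mul_mul_eq_zero_of_antisymm {ι : Type*} [Fintype ι] (U : ι → ι → ℝ)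
    (v : ι → ℝ) (hU : ∀ a b, U a b = -U b a) :
    ∑ a, ∑ b, v a * v b * U a b = 0 := by
  have h : ∑ a, ∑ b, v a * v b * U a b = -∑ a, ∑ b, v a * v b * U a b := by
    conv_lhs => rw [sum_comm]
    simp only [← sum_neg_distrib]
    exact sum_congr rfl fun a _ => sum_congr rfl fun b _ => by rw [hU]; ring
  linarith

theorem sum_sum_comm_sum_sum {ι : Type*} [Fintype ι] (f : ι → ι → ι → ι → ℝ) :
    ∑ a, ∑ b, ∑ c, ∑ d, f a b c d = ∑ c, ∑ d, ∑ a, ∑ b, f a b c d :=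
  calc ∑ a, ∑ b, ∑ c, ∑ d, f a b c d = ∑ p : ι × ι, ∑ c, ∑ d, f p.1 p.2 c d :=
        (Fintype.sum_prod_type' fun a b => ∑ c, ∑ d, f a b c d).symm
    _ = ∑ c, ∑ d, ∑ p : ι × ι, f p.1 p.2 c d := sum_comm_cycle.symm
    _ = ∑ c, ∑ d, ∑ a, ∑ b, f a b c d :=
      sum_congr rfl fun c _ => sum_congr rfl fun d _ => Fintype.sum_prod_type' fun a b => f a b c d

theorem sum_mul_symm_sub_eq {ι : Type*} [Fintype ι] (n p c : ι → ℝ) (m : ℝ)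
    (hc : ∑ ν, n ν * c ν = 1) (hp : ∑ ν, n ν * p ν = 0) (μ : ι) :
    ∑ ν, n ν * (p μ * c ν + p ν * c μ - 2 * m * c μ * c ν) = p μ - 2 * m * c μ :=
  calc ∑ ν, n ν * (p μ * c ν + p ν * c μ - 2 * m * c μ * c ν)
      = p μ * ∑ ν, n ν * c ν + c μ * ∑ ν, n ν * p ν - 2 * m * c μ * ∑ ν, n ν * c ν := by
        simp only [mul_sum, ← sum_add_distrib, ← sum_sub_distrib]
        exact sum_congr rfl fun ν _ => by ring
    _ = p μ - 2 * m * c μ := by rw [hc, hp]; ring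

theorem sum_curvature_force_reindex {ι : Type*} [Fintype ι] (r : ι → ι → ι → ℝ)
    (c x : ι → ℝ) (S : ι → ι → ℝ) :
    (∑ lam, ∑ β, ∑ ρ, x lam * c β * c ρ * r ρ β lam) +
        (1 / 2) * ∑ ρ, ∑ lam, ∑ β, c ρ * S lam β * r ρ β lam =
      (1 / 2) * (∑ ν, ∑ ρ, ∑ κ, r ν ρ κ * c ν * S κ ρ) +
        ∑ ν, ∑ ρ, ∑ κ, r ν ρ κ * c ν * c ρ * x κ := by
  have hx : ∑ lam, ∑ β, ∑ ρ, x lam * c β * c ρ * r ρ β lam =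
      ∑ ν, ∑ ρ, ∑ κ, r ν ρ κ * c ν * c ρ * x κ := by
    rw [sum_comm_cycle]
    exact sum_congr rfl fun _ _ => sum_comm.trans <|
      sum_congr rfl fun _ _ => sum_congr rfl fun _ _ => by ring
  have hS : ∑ ρ, ∑ lam, ∑ β, c ρ * S lam β * r ρ β lam =
      ∑ ν, ∑ ρ, ∑ κ, r ν ρ κ * c ν * S κ ρ :=
    sum_congr rfl fun _ _ => sum_comm.trans <|
      sum_congr rfl fun _ _ => sum_congr rfl fun _ _ => by ring
  rw [hx, hS, add_comm]

section Worldline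

variable {A g : ℝ → Fin 4 → Fin 4 → ℝ} {R : ℝ → Fin 4 → Fin 4 → Fin 4 → Fin 4 → ℝ}
  {Cdot : ℝ → Fin 4 → ℝ} {s : ℝ}

theorem sum_Ncov_mul (v : Fin 4 → ℝ) :
    ∑ ν, Ncov g Cdot s ν * v ν = -∑ μ, ∑ ν, g s μ ν * Cdot s μ * v ν := by
  simp only [Ncov, neg_mul, sum_neg_distrib, sum_mul]
  rw [sum_comm]

theorem D1_sub_mul {T U : ℝ → Fin 4 → ℝ} {c : ℝ → ℝ} {μ : Fin 4}
    (hT : DifferentiableAt ℝ (fun t => T t μ) s) (hU : DifferentiableAt ℝ (fun t => U t μ) s)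
    (hc : DifferentiableAt ℝ c s) :
    D1 A (fun t ν => T t ν - c t * U t ν) s μ =
      D1 A T s μ - (deriv c s * U s μ + c s * D1 A U s μ) := by
  have hsum : ∑ ν, A s μ ν * (T s ν - c s * U s ν) =
      ∑ ν, A s μ ν * T s ν - c s * ∑ ν, A s μ ν * U s ν := by
    rw [mul_sum, ← sum_sub_distrib]
    exact sum_congr rfl fun _ _ => by ring
  simp only [D1]
  rw [deriv_fun_sub hT (hc.fun_mul hU), deriv_fun_mul hc hU, hsum]
  ring

theorem hasDerivAt_sum_metric_mul {U V : ℝ → Fin 4 → ℝ}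
    (hmetric : ∀ μ ν, deriv (fun t => g t μ ν) s =
      ∑ ρ, A s ρ μ * g s ρ ν + ∑ ρ, A s ρ ν * g s μ ρ)
    (hg : ∀ μ ν, DifferentiableAt ℝ (fun t => g t μ ν) s)
    (hU : ∀ μ, DifferentiableAt ℝ (fun t => U t μ) s)
    (hV : ∀ ν, DifferentiableAt ℝ (fun t => V t ν) s) :
    HasDerivAt (fun t => ∑ μ, ∑ ν, g t μ ν * U t μ * V t ν)
      (∑ μ, ∑ ν, g s μ ν * D1 A U s μ * V s ν + ∑ μ, ∑ ν, g s μ ν * U s μ * D1 A V s ν) s := by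
  refine (HasDerivAt.fun_sum fun μ _ => HasDerivAt.fun_sum fun ν _ =>
    ((hg μ ν).hasDerivAt.fun_mul (hU μ).hasDerivAt).fun_mul (hV ν).hasDerivAt).congr_deriv ?_
  simp only [hmetric, D1, Fin.sum_univ_four]
  ring

theorem sum_Ncov_mul_D1_eq_zero {P : ℝ → Fin 4 → ℝ}
    (hmetric : ∀ μ ν, deriv (fun t => g t μ ν) s =
      ∑ ρ, A s ρ μ * g s ρ ν + ∑ ρ, A s ρ ν * g s μ ρ)
    (hg : ∀ μ ν, DifferentiableAt ℝ (fun t => g t μ ν) s)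
    (hC : ∀ μ, DifferentiableAt ℝ (fun t => Cdot t μ) s)
    (hP : ∀ ν, DifferentiableAt ℝ (fun t => P t ν) s)
    (hgeo : ∀ μ, D1 A Cdot s μ = 0) (hCP : ∀ t, ∑ μ, ∑ ν, g t μ ν * Cdot t μ * P t ν = 0) :
    ∑ ν, Ncov g Cdot s ν * D1 A P s ν = 0 := by
  have h := hasDerivAt_sum_metric_mul hmetric hg hC hP
  rw [funext hCP] at h
  simp only [hgeo, mul_zero, zero_mul, sum_const_zero, zero_add] at h
  rw [sum_Ncov_mul, h.unique (hasDerivAt_const s 0), neg_zero]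

theorem sum_Ncov_mul_curvature_eq_zero
    (hR : ∀ μ ν ρ κ, ∑ σ, g s μ σ * R s σ ν ρ κ = -∑ σ, g s ν σ * R s σ μ ρ κ) (ρ κ : Fin 4) :
    ∑ μ, Ncov g Cdot s μ * ∑ ν, R s μ ν ρ κ * Cdot s ν = 0 :=
  calc ∑ μ, Ncov g Cdot s μ * ∑ ν, R s μ ν ρ κ * Cdot s ν
      = -∑ σ, ∑ ν, Cdot s σ * Cdot s ν * ∑ μ, g s σ μ * R s μ ν ρ κ := by
        simp only [Ncov, neg_mul, sum_neg_distrib, sum_mul, mul_sum]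
        rw [sum_comm_cycle, neg_inj]
        exact sum_congr rfl fun _ _ => sum_comm.trans <|
          sum_congr rfl fun _ _ => sum_congr rfl fun _ _ => by ring
    _ = 0 := by
        rw [sum_sum_mul_mul_eq_zero_of_antisymm _ _ fun a b => hR a b ρ κ, neg_zero]

theorem sum_Ncov_mul_curvature_force_eq_zero
    (hR : ∀ μ ν ρ κ, ∑ σ, g s μ σ * R s σ ν ρ κ = -∑ σ, g s ν σ * R s σ μ ρ κ)
    (W : Fin 4 → Fin 4 → ℝ) :
    ∑ μ, Ncov g Cdot s μ * ∑ ν, ∑ ρ, ∑ κ, R s μ ν ρ κ * Cdot s ν * W ρ κ = 0 :=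
  calc ∑ μ, Ncov g Cdot s μ * ∑ ν, ∑ ρ, ∑ κ, R s μ ν ρ κ * Cdot s ν * W ρ κ
      = ∑ ρ, ∑ κ, W ρ κ * ∑ μ, Ncov g Cdot s μ * ∑ ν, R s μ ν ρ κ * Cdot s ν := by
        simp only [mul_sum]
        rw [sum_sum_comm_sum_sum]
        exact sum_congr rfl fun _ _ => sum_congr rfl fun _ _ => sum_congr rfl fun _ _ =>
          sum_congr rfl fun _ _ => by ring
    _ = 0 := by simp only [sum_Ncov_mul_curvature_eq_zero hR, mul_zero, sum_const_zero]

theorem sum_Ncov_mul_dipole_force_eq_zero {X : ℝ → Fin 4 → ℝ} {S : ℝ → Fin 4 → Fin 4 → ℝ}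
    (hR : ∀ μ ν ρ κ, ∑ σ, g s μ σ * R s σ ν ρ κ = -∑ σ, g s ν σ * R s σ μ ρ κ) :
    ∑ μ, Ncov g Cdot s μ * ((1 / 2) * (∑ ν, ∑ ρ, ∑ κ, R s μ ν ρ κ * Cdot s ν * S s κ ρ) +
      ∑ ν, ∑ ρ, ∑ κ, R s μ ν ρ κ * Cdot s ν * Cdot s ρ * X s κ) = 0 := by
  have hS := sum_Ncov_mul_curvature_force_eq_zero (Cdot := Cdot) hR fun ρ κ => S s κ ρ
  have hX := sum_Ncov_mul_curvature_force_eq_zero (Cdot := Cdot) hR fun ρ κ => Cdot s ρ * X s κ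
  simp only [← mul_assoc] at hX
  simp only [mul_add, sum_add_distrib, mul_left_comm (Ncov g Cdot s _), ← mul_sum, hS, hX]
  ring

end Worldline

theorem dipole_momentum_equation_general
    (A g : ℝ → Fin 4 → Fin 4 → ℝ)
    (R : ℝ → Fin 4 → Fin 4 → Fin 4 → Fin 4 → ℝ)
    (Cdot X P : ℝ → Fin 4 → ℝ) (S : ℝ → Fin 4 → Fin 4 → ℝ) (m : ℝ → ℝ)
    (hgsym : ∀ s μ ν, g s μ ν = g s ν μ)
    (hgdiff : ∀ μ ν, Differentiable ℝ fun t => g t μ ν)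
    (hPdiff : ∀ μ, Differentiable ℝ fun t => P t μ)
    (hCdiff : ∀ μ, Differentiable ℝ fun t => Cdot t μ)
    (hmdiff : Differentiable ℝ m)
    (hgeo : ∀ s μ, D1 A Cdot s μ = 0)
    (hmetric : ∀ s μ ν, deriv (fun t => g t μ ν) s =
      ∑ ρ, A s ρ μ * g s ρ ν + ∑ ρ, A s ρ ν * g s μ ρ)
    (hnorm : ∀ s, ∑ μ, ∑ ν, g s μ ν * Cdot s μ * Cdot s ν = -1)
    (hPorth : ∀ s, ∑ μ, ∑ ν, g s μ ν * P s μ * Cdot s ν = 0)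
    (hRanti2 : ∀ s μ ν ρ κ,
      ∑ σ, g s μ σ * R s σ ν ρ κ = -∑ σ, g s ν σ * R s σ μ ρ κ)
    (heq : ∀ s μ,
      D1 A (fun t μ' => ∑ ν, Ncov g Cdot t ν * xi2 P Cdot m t μ' ν) s μ =
        (∑ lam, ∑ β, ∑ ρ, X s lam * Cdot s β * Cdot s ρ * R s μ ρ β lam) +
          (1 / 2) * ∑ ρ, ∑ lam, ∑ β, Cdot s ρ * S s lam β * R s μ ρ β lam) :
    (∀ s, deriv m s = 0) ∧
    (∀ s μ, D1 A P s μ =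
      (1 / 2) * (∑ ν, ∑ ρ, ∑ κ, R s μ ν ρ κ * Cdot s ν * S s κ ρ) +
        ∑ ν, ∑ ρ, ∑ κ, R s μ ν ρ κ * Cdot s ν * Cdot s ρ * X s κ) := by
  have hCP : ∀ s, ∑ μ, ∑ ν, g s μ ν * Cdot s μ * P s ν = 0 := fun s =>
    sum_comm.trans <| (sum_congr rfl fun _ _ => sum_congr rfl fun _ _ => by
      rw [hgsym]; ring).trans (hPorth s)
  have hNC : ∀ s, ∑ ν, Ncov g Cdot s ν * Cdot s ν = 1 := fun s => by
    rw [sum_Ncov_mul, hnorm, neg_neg]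
  have hNP : ∀ s, ∑ ν, Ncov g Cdot s ν * P s ν = 0 := fun s => by
    rw [sum_Ncov_mul, hCP, neg_zero]
  have hxi : (fun t μ => ∑ ν, Ncov g Cdot t ν * xi2 P Cdot m t μ ν) =
      fun t μ => P t μ - 2 * m t * Cdot t μ :=
    funext₂ fun t μ => sum_mul_symm_sub_eq _ _ _ _ (hNC t) (hNP t) μ
  have hmom : ∀ s μ, D1 A P s μ - 2 * deriv m s * Cdot s μ =
      (1 / 2) * (∑ ν, ∑ ρ, ∑ κ, R s μ ν ρ κ * Cdot s ν * S s κ ρ) +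
        ∑ ν, ∑ ρ, ∑ κ, R s μ ν ρ κ * Cdot s ν * Cdot s ρ * X s κ := fun s μ => by
    rw [← sum_curvature_force_reindex, ← heq, hxi,
      D1_sub_mul (hPdiff μ s) (hCdiff μ s) ((hmdiff s).const_mul 2), hgeo,
      deriv_const_mul _ (hmdiff s), mul_zero, add_zero]
  have hmass : ∀ s, deriv m s = 0 := fun s => by
    have h := congrArg (fun v => ∑ μ, Ncov g Cdot s μ * v μ) (funext (hmom s))
    simp only [sum_Ncov_mul_dipole_force_eq_zero (hRanti2 s), mul_sub, sum_sub_distrib,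
      sum_Ncov_mul_D1_eq_zero (hmetric s) (fun μ ν => hgdiff μ ν s) (fun μ => hCdiff μ s)
        (fun ν => hPdiff ν s) (hgeo s) hCP,
      mul_left_comm (Ncov g Cdot s _), ← mul_sum, hNC] at h
    linarith
  refine ⟨hmass, fun s μ => ?_⟩
  rw [← hmom, hmass, mul_zero, zero_mul, sub_zero]

/-- The momentum half of the Mathisson–Papapetrou–Tulczyjew–Dixon dipole
equations: from
`∇_Ċ(N_ν ξ^{μν}) = X^λ Ċ^β Ċ^ρ R^μ_{ρβλ} + ½ Ċ^ρ S^{λβ} R^μ_{ρβλ}`,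
projecting with `Ċ_μ` and with `π^α_μ` yields `ṁ = 0` and
`∇_Ċ P^μ = ½ R^μ_{νρκ} Ċ^ν S^{κρ} + R^μ_{νρκ} Ċ^ν Ċ^ρ X^κ`. -/
theorem dipole_momentum_equation
    (A g : ℝ → Fin 4 → Fin 4 → ℝ)
    (R : ℝ → Fin 4 → Fin 4 → Fin 4 → Fin 4 → ℝ)
    (Cdot X P : ℝ → Fin 4 → ℝ) (S : ℝ → Fin 4 → Fin 4 → ℝ) (m : ℝ → ℝ)
    (hgsym : ∀ s μ ν, g s μ ν = g s ν μ)
    (hgdiff : ∀ μ ν, Differentiable ℝ fun t => g t μ ν)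
    (hPdiff : ∀ μ, Differentiable ℝ fun t => P t μ)
    (hCdiff : ∀ μ, Differentiable ℝ fun t => Cdot t μ)
    (hmdiff : Differentiable ℝ m)
    (hgeo : ∀ s μ, D1 A Cdot s μ = 0)
    (hmetric : ∀ s μ ν, deriv (fun t => g t μ ν) s =
      ∑ ρ, A s ρ μ * g s ρ ν + ∑ ρ, A s ρ ν * g s μ ρ)
    (hnorm : ∀ s, ∑ μ, ∑ ν, g s μ ν * Cdot s μ * Cdot s ν = -1)
    (hXorth : ∀ s, ∑ μ, ∑ ν, g s μ ν * X s μ * Cdot s ν = 0)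
    (hPorth : ∀ s, ∑ μ, ∑ ν, g s μ ν * P s μ * Cdot s ν = 0)
    (hCS : ∀ s ν, ∑ μ, ∑ ρ, g s ρ μ * Cdot s ρ * S s μ ν = 0)
    (hSanti : ∀ s μ ν, S s μ ν = -(S s ν μ))
    (hRanti : ∀ s μ ν ρ κ, R s μ ν ρ κ = -(R s μ ν κ ρ))
    (hRanti2 : ∀ s μ ν ρ κ,
      ∑ σ, g s μ σ * R s σ ν ρ κ = -∑ σ, g s ν σ * R s σ μ ρ κ)
    (heq : ∀ s μ,
      D1 A (fun t μ' => ∑ ν, Ncov g Cdot t ν * xi2 P Cdot m t μ' ν) s μ =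
        (∑ lam, ∑ β, ∑ ρ, X s lam * Cdot s β * Cdot s ρ * R s μ ρ β lam) +
          (1 / 2) * ∑ ρ, ∑ lam, ∑ β, Cdot s ρ * S s lam β * R s μ ρ β lam) :
    (∀ s, deriv m s = 0) ∧
    (∀ s μ, D1 A P s μ =
      (1 / 2) * (∑ ν, ∑ ρ, ∑ κ, R s μ ν ρ κ * Cdot s ν * S s κ ρ) +
        ∑ ν, ∑ ρ, ∑ κ, R s μ ν ρ κ * Cdot s ν * Cdot s ρ * X s κ) :=
  dipole_momentum_equation_general A g R Cdot X P S m hgsym hgdiff hPdiff hCdiff hmdiff hgeo hmetric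
    hnorm hPorth hRanti2 heq
end
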